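/- arXiv:2111.09359 — 8 statements merged into one kernel-verified Lean document; each statement's English description precedes it below -/
import Mathlib

section
/- Let f_m(x) and g_m(u) (m ≥ 0) be two sequences of functions, and x_1,…,x_n, u_1,…,u_n indeterminates/elements such that all the series h(i,j) = Σ_{m≥0} f_m(x_i) g_m(u_j) converge (e.g. in a ring of formal power series). Then Σ_λ det[f_{λ_j+n−j}(x_i)]_{i,j=1}^n · det[g_{λ_j+n−j}(u_i)]_{i,j=1}^n = det[h(i,j)]_{i,j=1}^n, where the sum ranges over all partitions λ of length at most n. -/
/-!
Expand `det [h(i,j)]` by the Leibniz formula and each entry into its series: interchanging the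
finite product with the summation turns the determinant into a sum over all index maps
`v : Fin n → ℕ` of `∏ᵢ f_{v i}(xᵢ) · det [g_{v j}(uᵢ)]`. The determinant vanishes unless `v` is
injective, and an injective `v` is uniquely `d ∘ τ` with `d` strictly decreasing and `τ` a
permutation; for fixed `d` the sum over `τ` is `det [f_{d j}(xᵢ)] · det [g_{d j}(uᵢ)]`. Finally the
strictly decreasing `d` are exactly the `λ + (n-1, …, 1, 0)` for partitions `λ`.
-/

open Filter Topology Finset Matrix

section ProductOfSums

variable {ι κ R : Type*}

lemma tendsto_apply_atTop_atTop (i : ι) :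
    Tendsto (fun s : ι → Finset κ => s i) atTop atTop :=
  tendsto_atTop_atTop_of_monotone (fun _ _ h => h i) fun u => ⟨fun _ => u, le_rfl⟩

variable [Fintype ι]

lemma Fintype.tendsto_piFinset_atTop [DecidableEq ι] :
    Tendsto (fun s : ι → Finset κ => Fintype.piFinset s) atTop atTop := by
  classical
  refine tendsto_atTop_atTop_of_monotone (fun s t hst => Fintype.piFinset_subset _ _ hst) ?_
  exact fun u => ⟨fun i => u.image (· i), fun l hl =>
    Fintype.mem_piFinset.2 fun i => mem_image_of_mem _ hl⟩

variable [CommSemiring R] [TopologicalSpace R] [ContinuousMul R] [T2Space R]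

theorem hasSum_prod_of_summable_pi {b : ι → κ → R} {t : ι → R}
    (hb : ∀ i, HasSum (b i) (t i)) (hS : Summable fun l : ι → κ => ∏ i, b i (l i)) :
    HasSum (fun l : ι → κ => ∏ i, b i (l i)) (∏ i, t i) := by
  classical
  obtain ⟨S, hSum⟩ := hS
  have hS : Tendsto (fun s : ι → Finset κ => ∏ i, ∑ m ∈ s i, b i m) atTop (𝓝 S) := by
    simpa only [prod_univ_sum, Function.comp_def] using hSum.comp Fintype.tendsto_piFinset_atTop
  have ht : Tendsto (fun s : ι → Finset κ => ∏ i, ∑ m ∈ s i, b i m) atTop (𝓝 (∏ i, t i)) :=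
    tendsto_finsetProd _ fun i _ => (hb i).comp (tendsto_apply_atTop_atTop i)
  rwa [← tendsto_nhds_unique hS ht]

end ProductOfSums

section Determinants

variable {ι κ R : Type*} [Fintype ι] [DecidableEq ι] [CommRing R]

lemma Matrix.sum_perm_prod_mul_det_submatrix (A B : Matrix ι ι R) :
    ∑ τ : Equiv.Perm ι, (∏ i, A i (τ i)) * (B.submatrix id τ).det = A.det * B.det := by
  simp_rw [det_permute', ← mul_assoc, ← sum_mul, mul_comm (∏ i, _), ← det_transpose A,
    det_apply', transpose_apply]

lemma Matrix.sum_perm_sign_mul_prod_mul (a : ι → R) (B : Matrix ι ι R) :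
    ∑ σ : Equiv.Perm ι, (Equiv.Perm.sign σ : ℤ) * ∏ i, a i * B (σ i) i = (∏ i, a i) * B.det := by
  simp_rw [det_apply', mul_sum, prod_mul_distrib, mul_left_comm]

variable [TopologicalSpace R] [IsTopologicalSemiring R] [T2Space R]

theorem hasSum_det_of_tsum_mul (f g : κ → ι → R)
    (hsum : ∀ i j, Summable fun m => f m i * g m j)
    (hsum' : ∀ σ : Equiv.Perm ι, Summable fun v : ι → κ => ∏ i, f (v i) i * g (v i) (σ i)) :
    HasSum (fun v : ι → κ => (∏ i, f (v i) i) * (Matrix.of fun i j => g (v j) i).det)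
      (Matrix.of fun i j => ∑' m, f m i * g m j).det := by
  have hperm (σ : Equiv.Perm ι) : HasSum (fun v : ι → κ => ∏ i, f (v i) i * g (v i) (σ i))
      (∏ i, ∑' m, f m i * g m (σ i)) :=
    hasSum_prod_of_summable_pi (b := fun i m => f m i * g m (σ i)) (fun i => (hsum i (σ i)).hasSum)
      (hsum' σ)
  rw [← det_transpose, det_apply']
  have h := hasSum_sum (s := univ) fun σ _ => (hperm σ).mul_left ((Equiv.Perm.sign σ : ℤ) : R)
  exact h.congr_fun fun v => (sum_perm_sign_mul_prod_mul _ (of fun i j => g (v j) i)).symm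

end Determinants

section Sorting

variable {κ : Type*} [LinearOrder κ] {n : ℕ}

lemma StrictAnti.eq_of_range_eq {d d' : Fin n → κ} (hd : StrictAnti d) (hd' : StrictAnti d')
    (h : Set.range d = Set.range d') : d = d' := by
  refine OrderDual.toDual.injective.comp_left <|
    ((strictMono_toDual_comp_iff.2 hd).range_inj (strictMono_toDual_comp_iff.2 hd')).1 ?_
  rw [Set.range_comp, Set.range_comp, h]

lemma injective_strictAnti_comp_perm :
    Function.Injective fun p : {d : Fin n → κ // StrictAnti d} × Equiv.Perm (Fin n) =>
      p.1.1 ∘ p.2 := by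
  rintro ⟨⟨d, hd⟩, τ⟩ ⟨⟨d', hd'⟩, τ'⟩ h
  have hdd' : d = d' := hd.eq_of_range_eq hd' <| by
    simpa only [Set.range_comp, EquivLike.range_eq_univ, Set.image_univ] using congrArg Set.range h
  subst hdd'
  simp only [Prod.mk.injEq, true_and]
  exact Equiv.ext fun i => hd.injective (congrFun h i)

lemma exists_strictAnti_comp_perm {v : Fin n → κ} (hv : Function.Injective v) :
    ∃ d : Fin n → κ, StrictAnti d ∧ ∃ τ : Equiv.Perm (Fin n), v = d ∘ τ := by
  have hsort : StrictMono (v ∘ Tuple.sort v) :=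
    (Tuple.monotone_sort v).strictMono_of_injective (hv.comp (Tuple.sort v).injective)
  refine ⟨v ∘ Tuple.sort v ∘ Fin.rev, hsort.comp_strictAnti Fin.rev_strictAnti,
    (Tuple.sort v)⁻¹.trans Fin.revPerm, ?_⟩
  ext i
  simp

end Sorting

section StrictAntiSum

variable {κ R : Type*} [LinearOrder κ] [CommRing R] [TopologicalSpace R] [IsTopologicalAddGroup R]
  {n : ℕ}

theorem HasSum.strictAnti_det_mul_det {f g : κ → Fin n → R} {a : R}
    (h : HasSum (fun v : Fin n → κ => (∏ i, f (v i) i) * (of fun i j => g (v j) i).det) a) :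
    HasSum (fun d : {d : Fin n → κ // StrictAnti d} =>
      (of fun i j => f (d.1 j) i).det * (of fun i j => g (d.1 j) i).det) a := by
  have hzero : ∀ v ∉ Set.range fun p : {d : Fin n → κ // StrictAnti d} × Equiv.Perm (Fin n) =>
      p.1.1 ∘ p.2, (∏ i, f (v i) i) * (of fun i j => g (v j) i).det = 0 := by
    intro v hv
    by_cases hinj : Function.Injective v
    · obtain ⟨d, hd, τ, rfl⟩ := exists_strictAnti_comp_perm hinj
      exact absurd ⟨(⟨d, hd⟩, τ), rfl⟩ hv
    · obtain ⟨i, j, hij, hne⟩ : ∃ i j, v i = v j ∧ i ≠ j := by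
        simpa [Function.Injective] using hinj
      rw [det_zero_of_column_eq hne fun k => by simp [hij], mul_zero]
  refine ((injective_strictAnti_comp_perm.hasSum_iff hzero).2 h).prod_fiberwise fun d => ?_
  convert hasSum_fintype _ using 1
  exact (sum_perm_prod_mul_det_submatrix _ _).symm

end StrictAntiSum

lemma StrictAnti.apply_add_le_apply_add {n : ℕ} {d : Fin n → ℕ} (hd : StrictAnti d) {i j : Fin n}
    (hij : i ≤ j) : d j + j ≤ d i + i := by
  have hcard := card_le_card_of_injOn d (s := Icc i j) (t := Icc (d j) (d i))
    (fun k hk => by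
      obtain ⟨hik, hkj⟩ := mem_Icc.1 hk
      exact mem_Icc.2 ⟨hd.antitone hkj, hd.antitone hik⟩)
    hd.injective.injOn
  have := hd.antitone hij
  rw [Fin.card_Icc, Nat.card_Icc] at hcard
  omega

def partitionEquivStrictAnti (n : ℕ) :
    {l : Fin n → ℕ // ∀ i j : Fin n, i ≤ j → l j ≤ l i} ≃ {d : Fin n → ℕ // StrictAnti d} where
  toFun l := ⟨fun j => l.1 j + (n - 1 - j), fun i j hij => by
    have := l.2 i j hij.le
    have : (i : ℕ) < j := hij
    dsimp only
    omega⟩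
  invFun d := ⟨fun j => d.1 j - (n - 1 - j), fun i j hij => by
    have := d.2.apply_add_le_apply_add hij
    dsimp only
    omega⟩
  left_inv l := by
    ext
    simp
  right_inv d := by
    ext j
    have hj := j.isLt
    have := d.2.apply_add_le_apply_add (i := j) (j := ⟨n - 1, by omega⟩)
      (Fin.le_def.2 (by dsimp only; omega))
    dsimp only at this ⊢
    omega

/-- Cauchy–Binet-type lemma: for two sequences of functions `f_m`, `g_m` (`m ≥ 0`)
evaluated at points `x₁,…,xₙ` resp. `u₁,…,uₙ` (encoded as `f m i = f_m(xᵢ)`,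
`g m i = g_m(uᵢ)`), if all the relevant series converge, then
`Σ_λ det[f_{λⱼ+n−j}(xᵢ)] · det[g_{λⱼ+n−j}(uᵢ)] = det[h(i,j)]` where
`h(i,j) = Σ_{m≥0} f_m(xᵢ) g_m(uⱼ)`, the sum ranging over all partitions `λ` of
length at most `n`. -/
theorem cauchy_binet_infinite {R : Type*} [CommRing R] [TopologicalSpace R]
    [IsTopologicalRing R] [T2Space R] {n : ℕ} (f g : ℕ → Fin n → R)
    (hsum : ∀ i j : Fin n, Summable fun m : ℕ => f m i * g m j)
    (hsum' : ∀ p : Fin n → Fin n,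
      Summable fun l : Fin n → ℕ => ∏ i : Fin n, (f (l i) i * g (l i) (p i))) :
    ∑' l : {l : Fin n → ℕ // ∀ i j : Fin n, i ≤ j → l j ≤ l i},
        (Matrix.of fun i j : Fin n => f (l.1 j + (n - 1 - (j : ℕ))) i).det *
          (Matrix.of fun i j : Fin n => g (l.1 j + (n - 1 - (j : ℕ))) i).det =
      (Matrix.of fun i j : Fin n => ∑' m : ℕ, f m i * g m j).det :=
  ((partitionEquivStrictAnti n).hasSum_iff.2
    (hasSum_det_of_tsum_mul f g hsum fun σ => hsum' σ).strictAnti_det_mul_det).tsum_eq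
end

section
/- det[1/((1 − x_i u_j)(1 − x_i^{−1} u_j))]_{i,j=1}^n = V(x_1 + x_1^{−1}, …, x_n + x_n^{−1}) · V(u_1, …, u_n) · ∏_{1≤i<j≤n} (1 − u_i u_j) / ∏_{i,j=1}^n ((1 − x_i u_j)(1 − x_i^{−1} u_j)), where V(a_1,…,a_n) = ∏_{i<j} (a_i − a_j) is the Vandermonde product. -/
/-!
With `y = x + x⁻¹` one has `(1 - x u) (1 - x⁻¹ u) = (1 + u²) + y (-u)`, so the matrix is a Cauchy
matrix `1 / (c j + y i * d j)` in homogeneous form, with `c = 1 + u²` and `d = -u`. Taking the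
Schur complement of the corner entry turns such a matrix into one of the same kind, of size one
less, with rows and columns rescaled; this gives the determinant
`∏_{i<j} (y i - y j) (c i d j - c j d i) / ∏_{i,j} (c j + y i d j)`. Finally
`c i d j - c j d i = (u i - u j) (1 - u i u j)`.
-/

/-- The Vandermonde product `V(a₁,…,aₙ) = ∏_{i<j} (a i - a j)`. -/
def vandermondeProd {K : Type*} [CommRing K] {n : ℕ} (a : Fin n → K) : K :=
  ∏ i : Fin n, ∏ j ∈ Finset.Ioi i, (a i - a j)

open Finset

theorem Fin.prod_univ_prod_Ioi_succ {M : Type*} [CommMonoid M] {n : ℕ}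
    (f : Fin (n + 1) → Fin (n + 1) → M) :
    ∏ i, ∏ j ∈ Ioi i, f i j =
      (∏ j : Fin n, f 0 j.succ) * ∏ i : Fin n, ∏ j ∈ Ioi i, f i.succ j.succ := by
  simp only [Fin.prod_univ_succ, Fin.prod_Ioi_zero, Fin.prod_Ioi_succ]

theorem Fin.prod_univ_prod_univ_succ {M : Type*} [CommMonoid M] {n : ℕ}
    (f : Fin (n + 1) → Fin (n + 1) → M) :
    ∏ i, ∏ j, f i j = f 0 0 * (∏ j : Fin n, f 0 j.succ) * (∏ i : Fin n, f i.succ 0) *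
      ∏ i : Fin n, ∏ j : Fin n, f i.succ j.succ := by
  simp only [Fin.prod_univ_succ, prod_mul_distrib]
  ac_rfl

namespace Matrix

theorem det_of_mul_mul {R ι : Type*} [CommRing R] [Fintype ι] [DecidableEq ι]
    (a b : ι → R) (f : ι → ι → R) :
    (of fun i j => a i * b j * f i j).det = (∏ i, a i) * (∏ j, b j) * (of f).det := by
  rw [show (of fun i j => a i * b j * f i j) = diagonal a * of f * diagonal b by
      ext i j; simp only [mul_diagonal, diagonal_mul, of_apply]; ring,
    det_mul, det_mul, det_diagonal, det_diagonal]
  ring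

theorem det_succ_eq_mul_det_schurComplement {K : Type*} [Field K] {n : ℕ}
    (A : Matrix (Fin (n + 1)) (Fin (n + 1)) K) (h : A 0 0 ≠ 0) :
    A.det = A 0 0 *
      (of fun i j : Fin n => A i.succ j.succ - A i.succ 0 * A 0 j.succ / A 0 0).det := by
  set B : Matrix (Fin (n + 1)) (Fin (n + 1)) K :=
    of fun i j => if i = 0 then A 0 j else A i j - A i 0 * A 0 j / A 0 0
  have hAB : A.det = B.det := by
    refine det_eq_of_forall_row_eq_smul_add_const (fun i => if i = 0 then 0 else A i 0 / A 0 0)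
      0 (if_pos rfl) fun i j => ?_
    by_cases hi : i = 0
    · simp [B, hi]
    · simp only [B, of_apply, if_neg hi, if_true]
      ring
  rw [hAB, det_succ_column_zero, Fin.sum_univ_succ, Fintype.sum_eq_zero _ fun i => ?_]
  · simp only [B, Fin.val_zero, pow_zero, one_mul, of_apply, if_true, Fin.succAbove_zero,
      add_zero]
    congr 2
  · simp [B, Fin.succ_ne_zero, mul_div_cancel_right₀ _ h]

/-- Cauchy's determinant in homogeneous coordinates `(c j : d j)`, which allows `d j = 0`. -/
theorem det_of_one_div_add_mul {K : Type*} [Field K] {n : ℕ} (y c d : Fin n → K)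
    (h : ∀ i j, c j + y i * d j ≠ 0) :
    (of fun i j => 1 / (c j + y i * d j)).det =
      (∏ i, ∏ j ∈ Ioi i, ((y i - y j) * (c i * d j - c j * d i))) /
        ∏ i, ∏ j, (c j + y i * d j) := by
  induction n with
  | zero => simp
  | succ n ih =>
    -- with `L i j = c j + y i * d j`, the left side is
    -- `(L i 0 * L 0 j - L 0 0 * L i j) / (L i 0 * L 0 j * L i j)`, and that numerator is
    -- `(y 0 - y i) * (c 0 * d j - c j * d 0)`
    have hschur (i j : Fin n) :
        1 / (c j.succ + y i.succ * d j.succ) - 1 / (c 0 + y i.succ * d 0) *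
          (1 / (c j.succ + y 0 * d j.succ)) / (1 / (c 0 + y 0 * d 0)) =
        (y 0 - y i.succ) / (c 0 + y i.succ * d 0) *
          ((c 0 * d j.succ - c j.succ * d 0) / (c j.succ + y 0 * d j.succ)) *
            (1 / (c j.succ + y i.succ * d j.succ)) := by
      have := h i.succ j.succ
      have := h i.succ 0
      have := h 0 j.succ
      have := h 0 0
      grind
    rw [det_succ_eq_mul_det_schurComplement _ (one_div_ne_zero (h 0 0))]
    simp only [of_apply, hschur]
    rw [det_of_mul_mul, ih _ _ _ fun i j => h i.succ j.succ, Fin.prod_univ_prod_Ioi_succ,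
      Fin.prod_univ_prod_univ_succ, prod_div_distrib, prod_div_distrib, prod_mul_distrib]
    simp only [div_eq_mul_inv, mul_inv]
    ring

end Matrix

/-- `det[1/((1 − xᵢuⱼ)(1 − xᵢ⁻¹uⱼ))] = V(x+x⁻¹) · V(u) · ∏_{i<j}(1 − uᵢuⱼ) /
∏_{i,j} ((1 − xᵢuⱼ)(1 − xᵢ⁻¹uⱼ))`. -/
theorem det_inv_one_sub_mul {K : Type*} [Field K] {n : ℕ} (x u : Fin n → K)
    (hx : ∀ i, x i ≠ 0)
    (h1 : ∀ i j, 1 - x i * u j ≠ 0) (h2 : ∀ i j, 1 - (x i)⁻¹ * u j ≠ 0) :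
    (Matrix.of fun i j : Fin n => 1 / ((1 - x i * u j) * (1 - (x i)⁻¹ * u j))).det =
      vandermondeProd (fun i => x i + (x i)⁻¹) * vandermondeProd u *
        (∏ i : Fin n, ∏ j ∈ Finset.Ioi i, (1 - u i * u j)) /
        ∏ i : Fin n, ∏ j : Fin n, ((1 - x i * u j) * (1 - (x i)⁻¹ * u j)) := by
  have hentry (i j : Fin n) : (1 - x i * u j) * (1 - (x i)⁻¹ * u j) =
      (1 + u j * u j) + (x i + (x i)⁻¹) * -u j := by
    field_simp [hx i]
    ring
  have hnum (i j : Fin n) : (x i + (x i)⁻¹ - (x j + (x j)⁻¹)) *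
      ((1 + u i * u i) * -u j - (1 + u j * u j) * -u i) =
      (x i + (x i)⁻¹ - (x j + (x j)⁻¹)) * (u i - u j) * (1 - u i * u j) := by
    ring
  simp only [hentry]
  rw [Matrix.det_of_one_div_add_mul _ _ _ fun i j => hentry i j ▸ mul_ne_zero (h1 i j) (h2 i j)]
  simp only [hnum, vandermondeProd, prod_mul_distrib]
end

section
/- (−1)^{n(n−1)/2} (u_1 ⋯ u_n)^{n−1} · V(u_1 + u_1^{−1}, …, u_n + u_n^{−1}) = V(u_1, …, u_n) · ∏_{1≤i<j≤n} (1 − u_i u_j). -/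
/-!
Clearing denominators, `(a + a⁻¹) - (b + b⁻¹) = -(a - b)(1 - ab) / (ab)`. Taking the product over
all pairs `i < j`, the denominators multiply to `(u₁ ⋯ uₙ)^(n-1)`, since each `uᵢ` occurs in
exactly `n - 1` pairs, and the signs to `(-1)^(n(n-1)/2)`, one for each pair.
-/

open Finset

namespace Fin

theorem sum_card_Ioi (n : ℕ) : ∑ i : Fin n, #(Ioi i) = n * (n - 1) / 2 := by
  simp only [Fin.card_Ioi]
  rw [Fin.sum_univ_eq_sum_range (fun i => n - 1 - i), sum_range_reflect (fun i => i) n,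
    sum_range_id]

theorem prod_prod_Ioi_neg {M : Type*} [CommMonoid M] [HasDistribNeg M] {n : ℕ}
    (f : Fin n → Fin n → M) :
    ∏ i, ∏ j ∈ Ioi i, -f i j = (-1) ^ (n * (n - 1) / 2) * ∏ i, ∏ j ∈ Ioi i, f i j := by
  simp_rw [prod_neg, prod_mul_distrib, prod_pow_eq_pow_sum, sum_card_Ioi]

theorem prod_prod_Ioi_mul {M : Type*} [CommMonoid M] {n : ℕ} (v : Fin n → M) :
    ∏ i, ∏ j ∈ Ioi i, v i * v j = (∏ i, v i) ^ (n - 1) := by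
  rw [prod_prod_Ioi_mul_eq_prod_prod_off_diag (fun _ j => v j), ← prod_pow]
  simp [card_compl]

end Fin

theorem mul_mul_add_inv_sub_add_inv {K : Type*} [Field K] {a b : K} (ha : a ≠ 0) (hb : b ≠ 0) :
    a * b * (a + a⁻¹ - (b + b⁻¹)) = -((a - b) * (1 - a * b)) := by
  field_simp
  ring

/-- `(−1)^{n(n−1)/2} (u₁⋯uₙ)^{n−1} · V(u₁+u₁⁻¹,…,uₙ+uₙ⁻¹)
      = V(u₁,…,uₙ) · ∏_{i<j} (1 − uᵢuⱼ)`. -/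
theorem neg_one_pow_mul_vandermonde_sum_inv {K : Type*} [Field K] {n : ℕ}
    (u : Fin n → K) (hu : ∀ i, u i ≠ 0) :
    (-1 : K) ^ (n * (n - 1) / 2) * (∏ i : Fin n, u i) ^ (n - 1) *
        vandermondeProd (fun i => u i + (u i)⁻¹) =
      vandermondeProd u * ∏ i : Fin n, ∏ j ∈ Finset.Ioi i, (1 - u i * u j) := by
  have cleared : (∏ i : Fin n, u i) ^ (n - 1) * vandermondeProd (fun i => u i + (u i)⁻¹) =
      (-1) ^ (n * (n - 1) / 2) *
        (vandermondeProd u * ∏ i : Fin n, ∏ j ∈ Ioi i, (1 - u i * u j)) := by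
    simp_rw [vandermondeProd, ← Fin.prod_prod_Ioi_mul, ← prod_mul_distrib,
      mul_mul_add_inv_sub_add_inv (hu _) (hu _), Fin.prod_prod_Ioi_neg]
  have sign_sq : (-1 : K) ^ (n * (n - 1) / 2) * (-1) ^ (n * (n - 1) / 2) = 1 := by
    rw [← mul_pow, neg_one_mul, neg_neg, one_pow]
  rw [mul_assoc, cleared, ← mul_assoc, sign_sq, one_mul]
end

section
/- det[u_i^{n−j} + u_i^{n+j−2}]_{i,j=1}^n = 2 · V(u_1,…,u_n) · ∏_{1≤i<j≤n} (1 − u_i u_j). -/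
open Polynomial Finset

namespace Polynomial

variable {R : Type*} [CommRing R]

theorem natDegree_dickson_le (k : ℕ) (a : R) : ∀ n, (dickson k a n).natDegree ≤ n
  | 0 => (natDegree_sub_le _ _).trans (by simp)
  | 1 => natDegree_X_le
  | n + 2 => by
    rw [dickson_add_two]
    refine (natDegree_sub_le _ _).trans (max_le ?_ ?_)
    · exact natDegree_mul_le.trans
        (by linarith [natDegree_dickson_le k a (n + 1), natDegree_X_le (R := R)])
    · exact (natDegree_C_mul_le _ _).trans ((natDegree_dickson_le k a n).trans (by omega))

theorem coeff_dickson_succ_self (k : ℕ) (a : R) : ∀ n, (dickson k a (n + 1)).coeff (n + 1) = 1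
  | 0 => by simp
  | n + 1 => by
    rw [dickson_add_two, coeff_sub, coeff_X_mul, coeff_dickson_succ_self k a n, coeff_C_mul,
      coeff_eq_zero_of_natDegree_lt ((natDegree_dickson_le k a n).trans_lt (by omega)),
      mul_zero, sub_zero]

theorem eval_homogenize_dickson_one (a x : R) :
    ∀ j t, MvPolynomial.eval ![x ^ 2 + a, x] ((dickson 1 a j).homogenize (j + t)) =
      x ^ (2 * j + t) + a ^ j * x ^ t
  | 0, t => by
    rw [dickson_zero, show ((3 : R[X]) - ((1 : ℕ) : R[X])) = C 2 by norm_num [map_ofNat],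
      homogenize_C]
    simp only [map_mul, map_pow, MvPolynomial.eval_C, MvPolynomial.eval_X, Matrix.cons_val_one,
      Matrix.cons_val_fin_one]
    ring
  | 1, t => by
    rw [dickson_one, homogenize_X (by omega), Nat.add_sub_cancel_left]
    simp only [map_mul, map_pow, MvPolynomial.eval_X, Matrix.cons_val_zero, Matrix.cons_val_one,
      Matrix.cons_val_fin_one]
    ring
  | j + 2, t => by
    rw [dickson_add_two, homogenize_sub, homogenize_C_mul,
      show j + 2 + t = 1 + (j + 1 + t) by omega,
      homogenize_mul _ _ natDegree_X_le (natDegree_dickson_le 1 a (j + 1) |>.trans (by omega)),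
      show 1 + (j + 1 + t) = j + (t + 2) by omega, homogenize_X one_ne_zero]
    simp only [map_sub, map_mul, map_pow, MvPolynomial.eval_C, MvPolynomial.eval_X,
      Matrix.cons_val_zero, Matrix.cons_val_one, Matrix.cons_val_fin_one,
      eval_homogenize_dickson_one a x (j + 1) t, eval_homogenize_dickson_one a x j (t + 2)]
    ring

end Polynomial

namespace Matrix

variable {R : Type*} [CommRing R] {N : ℕ}

theorem eval_homogenize_matrixOfPolynomials_eq_projVandermonde_mul (v w : Fin (N + 1) → R)
    (p : Fin (N + 1) → R[X]) :
    of (fun i j => MvPolynomial.eval ![v i, w i] ((p j).homogenize N)) =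
      projVandermonde v w * of (fun (i j : Fin (N + 1)) => (p j).coeff i) := by
  ext i j
  rw [of_apply, mul_apply, homogenize, MvPolynomial.eval_sum,
    Nat.sum_antidiagonal_eq_sum_range_succ_mk, ← Fin.sum_univ_eq_sum_range]
  refine Fintype.sum_congr _ _ fun l => ?_
  simp only [MvPolynomial.eval_monomial, pow_zero, implies_true, Finsupp.prod_fintype,
    Finsupp.coe_update, Fin.prod_univ_two, cons_val_zero, ne_eq, zero_ne_one, not_false_eq_true,
    Function.update_of_ne, Finsupp.single_eq_same, cons_val_one, cons_val_fin_one,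
    Function.update_self, projVandermonde_apply, Fin.val_rev, Nat.reduceSubDiff, of_apply]
  ring

theorem det_eval_homogenize_matrixOfPolynomials (v w : Fin (N + 1) → R)
    (p : Fin (N + 1) → R[X]) (h_deg : ∀ j, (p j).natDegree ≤ j) :
    (of fun i j => MvPolynomial.eval ![v i, w i] ((p j).homogenize N)).det =
      (projVandermonde v w).det * ∏ j, (p j).coeff j := by
  have upper : (of fun (i j : Fin (N + 1)) => (p j).coeff i).IsUpperTriangular :=
    fun i j hji => coeff_eq_zero_of_natDegree_lt ((h_deg j).trans_lt hji)
  rw [eval_homogenize_matrixOfPolynomials_eq_projVandermonde_mul, det_mul,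
    det_of_isUpperTriangular upper]
  rfl

theorem det_pow_add_mul_pow (a : R) (x : Fin (N + 1) → R) :
    (of fun i j : Fin (N + 1) => x i ^ (N + j) + a ^ (j : ℕ) * x i ^ (N - j)).det =
      2 * ∏ i, ∏ j ∈ Ioi i, ((x i - x j) * (a - x i * x j)) := by
  have entry (i j : Fin (N + 1)) : x i ^ (N + j) + a ^ (j : ℕ) * x i ^ (N - j) =
      MvPolynomial.eval ![x i ^ 2 + a, x i] ((dickson 1 a j).homogenize N) := by
    obtain ⟨t, ht⟩ := Nat.exists_eq_add_of_le (Nat.lt_succ_iff.mp j.isLt)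
    have hom := eval_homogenize_dickson_one a (x i) j t
    rw [← ht] at hom
    rw [hom, show N + j = 2 * j + t by omega, show N - j = t by omega]
  have diag : ∏ j : Fin (N + 1), (dickson 1 a j).coeff j = 2 := by
    rw [Fin.prod_univ_succ]
    norm_num [coeff_dickson_succ_self]
  simp_rw [entry,
    det_eval_homogenize_matrixOfPolynomials _ _ _ fun j => natDegree_dickson_le 1 a j, diag,
    det_projVandermonde]
  rw [mul_comm]
  congr 1
  refine prod_congr rfl fun i _ => prod_congr rfl fun j _ => ?_
  ring

end Matrix

/-- `det[uᵢ^{n−j} + uᵢ^{n+j−2}]_{i,j=1}^n = 2 · V(u₁,…,uₙ) · ∏_{i<j} (1 − uᵢuⱼ)`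
(rows `i = 1,…,n`, columns `j = 1,…,n`; here zero-indexed, so the exponents are
`n − 1 − j` and `n − 1 + j` for `j = 0,…,n−1`). -/
theorem det_pow_add_pow {K : Type*} [CommRing K] {n : ℕ} (hn : 0 < n) (u : Fin n → K) :
    (Matrix.of fun i j : Fin n => u i ^ (n - 1 - (j : ℕ)) + u i ^ (n - 1 + (j : ℕ))).det =
      2 * vandermondeProd u * ∏ i : Fin n, ∏ j ∈ Finset.Ioi i, (1 - u i * u j) := by
  obtain ⟨N, rfl⟩ := Nat.exists_eq_add_one_of_ne_zero hn.ne'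
  calc
    _ = (Matrix.of fun i j : Fin (N + 1) => u i ^ (N + j) + 1 ^ (j : ℕ) * u i ^ (N - j)).det := by
      simp only [Nat.add_sub_cancel, one_pow, one_mul, add_comm]
    _ = 2 * ∏ i, ∏ j ∈ Ioi i, ((u i - u j) * (1 - u i * u j)) := Matrix.det_pow_add_mul_pow 1 u
    _ = 2 * vandermondeProd u * ∏ i, ∏ j ∈ Ioi i, (1 - u i * u j) := by
      simp only [prod_mul_distrib, vandermondeProd, mul_assoc]
end

section
/- Let A be an (N+1)×(N+1) lower unitriangular matrix with inverse B, where N + 1 = n + m, and extend A, B by zero outside indices 0..N. Define A⁺ by A⁺_{ij} = A_{ij} + A_{i, 2(n−1)−j} for j < n−1 and A⁺_{ij} = A_{ij} for j ≥ n−1, and define B⁻ by B⁻_{ij} = B_{ij} − B_{2(n−1)−i, j} for i > n−1 and B⁻_{ij} = B_{ij} for i ≤ n−1. Then A⁺ B⁻ is the identity matrix. -/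
/-- Extension of a matrix indexed by `Fin N` to all integer indices, by zero. -/
def extByZero {N : ℕ} {R : Type*} [CommRing R] (A : Matrix (Fin N) (Fin N) R) :
    ℤ → ℤ → R := fun i j =>
  if h : 0 ≤ i ∧ i < (N : ℤ) ∧ 0 ≤ j ∧ j < (N : ℤ) then
    A ⟨i.toNat, by omega⟩ ⟨j.toNat, by omega⟩ else 0

/-! Write `c = n - 1`. Expanding `A⁺_{ij} B⁻_{jk}` gives `A_{ij} B_{jk}` plus two cross terms; the
product of the two corrections vanishes since no `j` satisfies both `j < c` and `c < j`. The cross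
terms `∑_{j < c} A_{i,2c-j} B_{jk}` and `∑_{j > c} A_{ij} B_{2c-j,k}` are exchanged by the reflection
`j ↦ 2c - j` of `ℤ`, over which extension by zero lets both sums range. Hence `A⁺ B⁻ = A B`. -/

section ExtByZero

variable {N : ℕ} {R : Type*} [CommRing R]

@[simp]
lemma extByZero_coe (A : Matrix (Fin N) (Fin N) R) (i j : Fin N) :
    extByZero A i j = A i j := by
  rw [extByZero, dif_pos (by omega)]
  rfl

lemma extByZero_ne_zero (A : Matrix (Fin N) (Fin N) R) {i j : ℤ} (h : extByZero A i j ≠ 0) :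
    0 ≤ i ∧ i < N ∧ 0 ≤ j ∧ j < N := by
  by_contra hij
  exact h (dif_neg hij)

end ExtByZero

lemma Fin.sum_intCast_eq_finsum {M : Type*} [AddCommMonoid M] {N : ℕ} (g : ℤ → M)
    (hg : ∀ j, g j ≠ 0 → 0 ≤ j ∧ j < N) :
    ∑ j : Fin N, g j = ∑ᶠ j : ℤ, g j := by
  let e : Fin N ↪ ℤ := ⟨fun j => (j : ℤ), fun a b h => Fin.ext (by simpa using h)⟩
  rw [finsum_eq_sum_of_support_subset g (s := Finset.univ.map e), Finset.sum_map]
  · rfl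
  · intro j hj
    obtain ⟨hj0, hjN⟩ := hg j hj
    simp only [Finset.coe_map, Finset.coe_univ, Set.image_univ, Set.mem_range]
    exact ⟨⟨j.toNat, by omega⟩, Int.toNat_of_nonneg hj0⟩

lemma Fin.sum_reflect_eq {R : Type*} [CommRing R] {N : ℕ} (a b : ℤ → R)
    (ha : ∀ j, a j ≠ 0 → 0 ≤ j ∧ j < N) (hb : ∀ j, b j ≠ 0 → 0 ≤ j ∧ j < N) (c : ℤ) :
    ∑ j : Fin N, (if (j : ℤ) < c then a (2 * c - j) * b j else 0) =
      ∑ j : Fin N, (if c < (j : ℤ) then a j * b (2 * c - j) else 0) := by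
  rw [Fin.sum_intCast_eq_finsum (fun j => if j < c then a (2 * c - j) * b j else 0)
      fun j hj => by split_ifs at hj; exacts [hb j (right_ne_zero_of_mul hj), absurd rfl hj],
    Fin.sum_intCast_eq_finsum (fun j => if c < j then a j * b (2 * c - j) else 0)
      fun j hj => by split_ifs at hj; exacts [ha j (left_ne_zero_of_mul hj), absurd rfl hj],
    ← finsum_comp_equiv (Equiv.subLeft (2 * c))]
  refine finsum_congr fun j => ?_
  simp only [Equiv.subLeft_apply, sub_sub_cancel]
  exact if_congr (by omega) rfl rfl

theorem Matrix.addReflect_mul_subReflect {R : Type*} [CommRing R] {N : ℕ}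
    (A B : Matrix (Fin N) (Fin N) R) (c : ℤ) :
    (Matrix.of fun i j : Fin N =>
        if (j : ℤ) < c then A i j + extByZero A (i : ℤ) (2 * c - (j : ℤ)) else A i j) *
      (Matrix.of fun i j : Fin N =>
        if c < (i : ℤ) then B i j - extByZero B (2 * c - (i : ℤ)) (j : ℤ) else B i j) =
      A * B := by
  ext i k
  have entry : ∀ j : Fin N,
      (if (j : ℤ) < c then A i j + extByZero A i (2 * c - j) else A i j) *
          (if c < (j : ℤ) then B j k - extByZero B (2 * c - j) k else B j k) =
        A i j * B j k
          + (if (j : ℤ) < c then extByZero A i (2 * c - j) * extByZero B j k else 0)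
          - (if c < (j : ℤ) then extByZero A i j * extByZero B (2 * c - j) k else 0) := by
    intro j
    rcases lt_trichotomy (j : ℤ) c with h | h | h
    · simp [h, h.not_gt, add_mul]
    · simp [h]
    · simp [h, h.not_gt, mul_sub]
  simp only [Matrix.mul_apply, Matrix.of_apply, entry, Finset.sum_sub_distrib,
    Finset.sum_add_distrib]
  linear_combination Fin.sum_reflect_eq (extByZero A i) (fun j => extByZero B j k)
    (fun _ h => (extByZero_ne_zero A h).2.2)
    (fun _ h => ⟨(extByZero_ne_zero B h).1, (extByZero_ne_zero B h).2.1⟩) c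

theorem Aplus_mul_Bminus_general {R : Type*} [CommRing R] (n m : ℕ)
    (A B : Matrix (Fin (n + m)) (Fin (n + m)) R)
    (hAB : A * B = 1) :
    (Matrix.of fun i j : Fin (n + m) =>
        if (j : ℤ) < (n : ℤ) - 1 then A i j + extByZero A (i : ℤ) (2 * ((n : ℤ) - 1) - (j : ℤ))
        else A i j) *
      (Matrix.of fun i j : Fin (n + m) =>
        if (n : ℤ) - 1 < (i : ℤ) then B i j - extByZero B (2 * ((n : ℤ) - 1) - (i : ℤ)) (j : ℤ)
        else B i j) = 1 :=
  (Matrix.addReflect_mul_subReflect A B ((n : ℤ) - 1)).trans hAB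

/-- Let `A` be a lower unitriangular `(N+1)×(N+1)` matrix with inverse `B`, where
`N + 1 = n + m`, both extended by zero outside the index range. Define
`A⁺_{ij} = A_{ij} + A_{i,2(n−1)−j}` for `j < n−1` and `A⁺_{ij} = A_{ij}` otherwise, and
`B⁻_{ij} = B_{ij} − B_{2(n−1)−i,j}` for `i > n−1` and `B⁻_{ij} = B_{ij}` otherwise.
Then `A⁺ B⁻ = 1`. -/
theorem Aplus_mul_Bminus {R : Type*} [CommRing R] (n m : ℕ)
    (A B : Matrix (Fin (n + m)) (Fin (n + m)) R)
    (hA_tri : ∀ i j : Fin (n + m), (i : ℕ) < (j : ℕ) → A i j = 0)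
    (hA_diag : ∀ i : Fin (n + m), A i i = 1)
    (hAB : A * B = 1) (hBA : B * A = 1) :
    (Matrix.of fun i j : Fin (n + m) =>
        if (j : ℤ) < (n : ℤ) - 1 then A i j + extByZero A (i : ℤ) (2 * ((n : ℤ) - 1) - (j : ℤ))
        else A i j) *
      (Matrix.of fun i j : Fin (n + m) =>
        if (n : ℤ) - 1 < (i : ℤ) then B i j - extByZero B (2 * ((n : ℤ) - 1) - (i : ℤ)) (j : ℤ)
        else B i j) = 1 :=
  Aplus_mul_Bminus_general n m A B hAB
end

section
/- The sequence dual to the factorial powers f_k(x) = (x−c_0)⋯(x−c_{k−1}) is ĝ_k(u) = u^k / ∏_{l=0}^k (1 − u c_l); that is, Σ_{k=0}^∞ (x−c_0)⋯(x−c_{k−1}) · u^k / ((1−u c_0)⋯(1−u c_k)) = 1/(1 − x u) as a formal power series identity in u over the polynomial ring in x and the c_l. -/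
/-!
Write `D_l = 1 - c_l u` and `P_n = (x - c_0)⋯(x - c_{n-1})`. Since `D_n - (x - c_n) u = 1 - x u`,
the `n`-th term of the series is `R_n - R_{n+1}` for `R_n = P_n u^n / ((1 - x u) D_0 ⋯ D_{n-1})`.
Telescoping, `1/(1 - x u)` minus the `n`-th partial sum is `R_n`, which is divisible by `u^n`,
so the partial sums converge coefficientwise.
-/

/-- The topology of coefficientwise (discrete) convergence on formal power series. -/
noncomputable instance powerSeriesTopology (K : Type*) : TopologicalSpace (PowerSeries K) :=
  letI : TopologicalSpace K := ⊥
  (by unfold PowerSeries MvPowerSeries; exact Pi.topologicalSpace)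

open PowerSeries Finset

namespace PowerSeries

open WithPiTopology in
theorem hasSum_of_X_pow_dvd_sub_sum_range {R : Type*} [Ring R] [TopologicalSpace R]
    {f : ℕ → R⟦X⟧} {g : R⟦X⟧} (h : ∀ n, X ^ n ∣ g - ∑ k ∈ range n, f k) : HasSum f g := by
  have hf : ∀ k, X ^ k ∣ f k := fun k => by
    have := dvd_sub (h k) ((pow_dvd_pow X k.le_succ).trans (h (k + 1)))
    rwa [sum_range_succ, sub_sub_sub_cancel_left, add_sub_cancel_left] at this
  rw [hasSum_iff_hasSum_coeff]
  intro d
  have hg : coeff d g = ∑ k ∈ range (d + 1), coeff d (f k) := by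
    rw [← map_sum, ← sub_eq_zero, ← map_sub]
    exact X_pow_dvd_iff.1 (h (d + 1)) d (lt_add_one d)
  rw [hg]
  exact hasSum_sum_of_ne_finset_zero fun k hk => X_pow_dvd_iff.1 (hf k) d (by simpa using hk)

end PowerSeries

section FactorialDual

variable {K : Type*} [Field K] (x : K) (c : ℕ → K)

noncomputable def factorialDualTerm (k : ℕ) : K⟦X⟧ :=
  C (∏ i ∈ range k, (x - c i)) * X ^ k * (∏ l ∈ range (k + 1), (1 - C (c l) * X))⁻¹

theorem one_sub_C_mul_X_mul_inv (a : K) : (1 - C a * X) * (1 - C a * X)⁻¹ = 1 :=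
  PowerSeries.mul_inv_cancel _ (by simp)

theorem inv_prod_range_succ_mul_one_sub_C_mul_X (n : ℕ) :
    (∏ l ∈ range (n + 1), (1 - C (c l) * X))⁻¹ * (1 - C (c n) * X) =
      (∏ l ∈ range n, (1 - C (c l) * X))⁻¹ := by
  rw [prod_range_succ, PowerSeries.mul_inv_rev, mul_comm, ← mul_assoc, one_sub_C_mul_X_mul_inv,
    one_mul]

theorem inv_one_sub_C_mul_X_sub_sum_factorialDualTerm (n : ℕ) :
    (1 - C x * X)⁻¹ - ∑ k ∈ range n, factorialDualTerm x c k =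
      C (∏ i ∈ range n, (x - c i)) * X ^ n *
        ((1 - C x * X)⁻¹ * (∏ l ∈ range n, (1 - C (c l) * X))⁻¹) := by
  induction n with
  | zero => simp
  | succ n ih =>
    rw [sum_range_succ, ← sub_sub, ih, factorialDualTerm, prod_range_succ (fun i => x - c i),
      map_mul, map_sub]
    linear_combination
      -(C (∏ i ∈ range n, (x - c i)) * X ^ n * (1 - C x * X)⁻¹) *
          inv_prod_range_succ_mul_one_sub_C_mul_X c n +
        C (∏ i ∈ range n, (x - c i)) * X ^ n * (∏ l ∈ range (n + 1), (1 - C (c l) * X))⁻¹ *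
          one_sub_C_mul_X_mul_inv x

open WithPiTopology in
theorem hasSum_factorialDualTerm [TopologicalSpace K] :
    HasSum (factorialDualTerm x c) (1 - C x * X)⁻¹ :=
  hasSum_of_X_pow_dvd_sub_sum_range fun n => by
    rw [inv_one_sub_C_mul_X_sub_sum_factorialDualTerm]
    exact (dvd_mul_left _ _).mul_right _

end FactorialDual

/-- The dual of the factorial powers `f_k(x) = (x−c₀)⋯(x−c_{k−1})` is
`ĝ_k(u) = u^k / ∏_{l=0}^{k} (1 − u c_l)`; that is,
`Σ_k (x−c₀)⋯(x−c_{k−1}) · u^k/((1−uc₀)⋯(1−uc_k)) = 1/(1−xu)` as formal power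
series in `u` (the power series variable `X`). -/
theorem factorial_dual_sequence {K : Type*} [Field K] (x : K) (c : ℕ → K) :
    ∑' k : ℕ,
        (PowerSeries.C (R := K) (∏ i ∈ Finset.range k, (x - c i)) * (PowerSeries.X : PowerSeries K) ^ k *
          (∏ l ∈ Finset.range (k + 1), (1 - PowerSeries.C (R := K) (c l) * PowerSeries.X))⁻¹) =
      (1 - PowerSeries.C (R := K) x * PowerSeries.X)⁻¹ := by
  let _ : TopologicalSpace K := ⊥
  have : DiscreteTopology K := ⟨rfl⟩
  -- `powerSeriesTopology K` is definitionally the product topology over the discrete `K`.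
  open WithPiTopology in exact (hasSum_factorialDualTerm x c).tsum_eq
end

section
/- (Dual Cauchy identity, type A ninth variation) Let F be an admissible sequence and s_λ^F the associated generalized Schur functions. Then Σ_{λ ⊆ (m^n)} (−1)^{|λ̃|} s_λ^F(x_1,…,x_n) s_{λ̃}^F(y_1,…,y_m) = ∏_{i=1}^n ∏_{j=1}^m (x_i − y_j), where λ̃ = (n − λ'_m, n − λ'_{m−1}, …, n − λ'_1) and λ' is the conjugate partition. -/
/-- The generalised Schur function `s_λ^F(x₁,…,xₙ) = det[f_{λⱼ+n−j}(xᵢ)]/V(x)`. -/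
noncomputable def genSchur {K : Type*} [Field K] {n : ℕ} (F : ℕ → Polynomial K)
    (x : Fin n → K) (l : Fin n → ℕ) : K :=
  (Matrix.of fun i j : Fin n => (F (l j + (n - 1 - (j : ℕ)))).eval (x i)).det /
    vandermondeProd x

/-!
Put `z = (x₁,…,xₙ,y₁,…,y_m)` and `A = (f_{n+m-1-j}(zᵢ))`. Since `f_k` is monic of degree `k`,
column operations turn `A` into a Vandermonde matrix, so `det A = V(z) = V(x) V(y) ∏ (xᵢ - yⱼ)`.
On the other hand, the Laplace expansion of `det A` along the `x`-rows runs over the ways of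
splitting the columns between `x` and `y`. These splittings are indexed by the partitions
`λ ⊆ (mⁿ)`: the `x`-rows take the columns `a + m - λₐ` and the `y`-rows the complementary columns
`b + λ'_{m-b}`, which gives exactly the degrees of `s_λ^F(x)` and of `s_{λ̃}^F(y)`, and the
shuffle has sign `(-1)^{|λ̃|}`.
-/

open Finset Equiv Equiv.Perm Polynomial Matrix

lemma Fin.castAdd_lt_natAdd {n m : ℕ} (a : Fin n) (b : Fin m) : castAdd m a < natAdd n b := by
  simp only [Fin.lt_def, Fin.val_castAdd, Fin.val_natAdd]
  omega

lemma Fin.card_filter_le_val {n c : ℕ} : #{i : Fin n | c ≤ (i : ℕ)} = n - c := by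
  simp only [← not_lt, filter_not, card_univ_sdiff, Fintype.card_fin, Fin.card_filter_val_lt]
  omega

lemma StrictMono.fin_val_sub_val_le {n k : ℕ} {g : Fin n → Fin k} (hg : StrictMono g)
    (a b : Fin n) : (b : ℕ) - a ≤ g b - g a := by
  simpa only [Fin.card_Ioc] using card_le_card_of_injOn (s := Ioc a b) (t := Ioc (g a) (g b)) g
    (fun x hx => by simp only [coe_Ioc, Set.mem_Ioc] at hx ⊢; exact ⟨hg hx.1, hg.monotone hx.2⟩)
    hg.injective.injOn

lemma StrictMono.fin_val_bounds {n k : ℕ} {g : Fin n → Fin k} (hg : StrictMono g) (a : Fin n) :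
    (a : ℕ) ≤ g a ∧ (g a : ℕ) + n ≤ a + k := by
  have := a.isLt
  have h₀ := hg.fin_val_sub_val_le ⟨0, by omega⟩ a
  have h₁ := hg.fin_val_sub_val_le a ⟨n - 1, by omega⟩
  have := (g ⟨n - 1, by omega⟩).isLt
  simp only at h₀ h₁
  omega

theorem Equiv.Perm.sign_eq_neg_one_pow_of_strictMono_castAdd_natAdd {n m : ℕ}
    (σ : Perm (Fin (n + m))) (hx : StrictMono (σ ∘ Fin.castAdd m))
    (hy : StrictMono (σ ∘ Fin.natAdd n)) :
    sign σ = (-1) ^ ∑ b : Fin m, #{a | σ (Fin.natAdd n b) < σ (Fin.castAdd m a)} := by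
  have hx' : ∀ a a', σ (Fin.castAdd m a) < σ (Fin.castAdd m a') ↔ a < a' :=
    fun _ _ => hx.lt_iff_lt
  have hy' : ∀ b b', σ (Fin.natAdd n b) < σ (Fin.natAdd n b') ↔ b < b' :=
    fun _ _ => hy.lt_iff_lt
  have hxy : ∀ a b, ¬ σ (Fin.castAdd m a) < σ (Fin.natAdd n b) ↔
      σ (Fin.natAdd n b) < σ (Fin.castAdd m a) := fun a b =>
    not_lt.trans (σ.injective.ne (Fin.castAdd_lt_natAdd a b).ne').le_iff_lt
  rw [sign_eq_prod_prod_Ioi, ← prod_pow_eq_pow_sum]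
  simp only [← filter_lt_eq_Ioi, prod_filter, Fin.prod_univ_add, hx', hy', Fin.castAdd_lt_natAdd,
    (Fin.castAdd_lt_natAdd _ _).not_gt, Fin.natAdd_lt_natAdd_iff,
    (Fin.strictMono_castAdd m).lt_iff_lt]
  simp +contextual only [if_true, if_false, ite_self, prod_const_one, one_mul, mul_one]
  rw [prod_comm]
  exact prod_congr rfl fun b _ => by simp [prod_ite, hxy]

section

variable {R : Type*} [CommRing R]

lemma vandermondeProd_eq_prod_ite {N : ℕ} (v : Fin N → R) :
    vandermondeProd v = ∏ i, ∏ j, if i < j then v i - v j else 1 := by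
  simp [vandermondeProd, prod_ite, filter_lt_eq_Ioi]

lemma vandermondeProd_eq_det_vandermonde_rev {N : ℕ} (v : Fin N → R) :
    vandermondeProd v = (vandermonde (v ∘ Fin.rev)).det := by
  rw [det_vandermonde, vandermondeProd_eq_prod_ite]
  calc _ = ∏ i : Fin N, ∏ j : Fin N, if j < i then v i.rev - v j.rev else 1 := by
        rw [← Equiv.prod_comp Fin.revPerm]
        refine prod_congr rfl fun i _ => ?_
        rw [← Equiv.prod_comp Fin.revPerm]
        simp [Fin.rev_lt_rev]
    _ = _ := by
        rw [prod_comm]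
        simp [prod_ite, filter_lt_eq_Ioi]

lemma det_eval_rev_eq_vandermondeProd {N : ℕ} (F : ℕ → R[X]) (hmonic : ∀ k, (F k).Monic)
    (hdeg : ∀ k, (F k).natDegree = k) (v : Fin N → R) :
    (of fun i j : Fin N => (F (N - 1 - j)).eval (v i)).det = vandermondeProd v := by
  rw [vandermondeProd_eq_det_vandermonde_rev, det_eval_matrixOfPolynomials_eq_det_vandermonde _
    (fun j => F j) (fun j => hdeg j) (fun j => hmonic j), ← det_submatrix_equiv_self Fin.revPerm]
  congr 1
  ext i j
  simp only [submatrix_apply, of_apply, Fin.revPerm_apply, Function.comp_apply, Fin.val_rev]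
  congr
  omega

lemma vandermondeProd_append {n m : ℕ} (x : Fin n → R) (y : Fin m → R) :
    vandermondeProd (Fin.append x y) =
      vandermondeProd x * vandermondeProd y * ∏ i, ∏ j, (x i - y j) := by
  simp only [vandermondeProd_eq_prod_ite, Fin.prod_univ_add, Fin.append_left, Fin.append_right,
    (Fin.strictMono_castAdd m).lt_iff_lt, Fin.natAdd_lt_natAdd_iff, Fin.castAdd_lt_natAdd,
    (Fin.castAdd_lt_natAdd _ _).not_gt, if_true, if_false, prod_const_one, mul_one,
    prod_mul_distrib]
  ring

theorem Matrix.det_eq_sum_sign_mul_det_submatrix_mul_det_submatrix {n m : ℕ} {ι : Type*}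
    [Fintype ι] (M : Matrix (Fin (n + m)) (Fin (n + m)) R) (σ : ι → Perm (Fin (n + m)))
    (hσ : Function.Bijective fun p : ι × Perm (Fin n) × Perm (Fin m) =>
      σ p.1 * finSumFinEquiv.permCongr (p.2.1.sumCongr p.2.2)) :
    M.det = ∑ i, (sign (σ i) : R) * (M.submatrix (Fin.castAdd m) (σ i ∘ Fin.castAdd m)).det *
      (M.submatrix (Fin.natAdd n) (σ i ∘ Fin.natAdd n)).det := by
  rw [← det_transpose, det_apply', ← hσ.sum_comp, Fintype.sum_prod_type]
  refine sum_congr rfl fun i _ => ?_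
  rw [← det_transpose, ← det_transpose (M.submatrix _ _), det_apply', det_apply', mul_assoc,
    sum_mul_sum, mul_sum, Fintype.sum_prod_type]
  refine sum_congr rfl fun π _ => ?_
  rw [mul_sum]
  refine sum_congr rfl fun ρ _ => ?_
  simp only [Perm.sign_mul, sign_permCongr, sign_sumCongr, Units.val_mul, Int.cast_mul,
    Perm.coe_mul, Function.comp_apply, permCongr_apply, Equiv.sumCongr_apply, transpose_apply,
    Fin.prod_univ_add, finSumFinEquiv_symm_apply_castAdd, Sum.map_inl, finSumFinEquiv_apply_left,
    finSumFinEquiv_symm_apply_natAdd, Sum.map_inr, finSumFinEquiv_apply_right, submatrix_apply]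
  ring

end

namespace DualCauchy

variable {n m : ℕ} (l : Fin n → Fin (m + 1))

/-- For `l = λ`, `conjPart l k` is `λ'_k` and `dualPart l` is `λ̃`, indexed from `0`
(`m - 1 - j + 1 = m - j` for `j < m`). -/
def conjPart (k : ℕ) : ℕ := #{r | k ≤ (l r : ℕ)}

def dualPart (j : Fin m) : ℕ := n - conjPart l (m - 1 - j + 1)

lemma conjPart_le (k : ℕ) : conjPart l k ≤ n :=
  (card_filter_le _ _).trans_eq (card_fin n)

lemma conjPart_antitone : Antitone (conjPart l) :=
  fun _ _ hk => card_le_card (monotone_filter_right _ fun _ _ hr => hk.trans hr)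

def xPos (a : Fin n) : Fin (n + m) := ⟨a + (m - l a), by have := (l a).isLt; omega⟩

def yPos (b : Fin m) : Fin (n + m) :=
  ⟨b + conjPart l (m - 1 - b + 1), by have := conjPart_le l (m - 1 - b + 1); omega⟩

variable {l}

lemma lt_conjPart_iff (hl : Antitone l) {a : Fin n} {k : ℕ} :
    (a : ℕ) < conjPart l k ↔ k ≤ (l a : ℕ) :=
  Fin.lt_card_filter_univ_iff_apply_of_imp _ fun _ _ hji hk => hk.trans (hl hji)

lemma xPos_strictMono (hl : Antitone l) : StrictMono (xPos l) := by
  intro a b hab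
  have := hl hab.le
  simp only [xPos, Fin.lt_def, Fin.le_def] at hab this ⊢
  omega

lemma yPos_strictMono : StrictMono (yPos l) := by
  intro b b' hb
  have := conjPart_antitone l (show m - 1 - b' + 1 ≤ m - 1 - b + 1 by omega)
  simp only [yPos, Fin.lt_def] at hb this ⊢
  omega

lemma yPos_lt_xPos_iff (hl : Antitone l) {a : Fin n} {b : Fin m} :
    yPos l b < xPos l a ↔ conjPart l (m - 1 - b + 1) ≤ a := by
  have := lt_conjPart_iff hl (a := a) (k := m - 1 - b + 1)
  simp only [yPos, xPos, Fin.mk_lt_mk]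
  omega

lemma xPos_ne_yPos (hl : Antitone l) (a : Fin n) (b : Fin m) : xPos l a ≠ yPos l b := by
  intro h
  have := lt_conjPart_iff hl (a := a) (k := m - 1 - b + 1)
  simp only [yPos, xPos, Fin.mk.injEq] at h
  omega

variable (l) in
noncomputable def shuffle (hl : Antitone l) : Perm (Fin (n + m)) :=
  finSumFinEquiv.symm.trans <| Equiv.ofBijective (Sum.elim (xPos l) (yPos l)) <| by
    rw [Fintype.bijective_iff_injective_and_card]
    refine ⟨?_, by simp⟩
    rintro (a | b) (a' | b') h
    · exact congrArg _ ((xPos_strictMono hl).injective h)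
    · exact (xPos_ne_yPos hl a b' h).elim
    · exact (xPos_ne_yPos hl a' b h.symm).elim
    · exact congrArg _ (yPos_strictMono.injective h)

@[simp] lemma shuffle_castAdd (hl : Antitone l) (a : Fin n) :
    shuffle l hl (Fin.castAdd m a) = xPos l a := by
  simp [shuffle]

@[simp] lemma shuffle_natAdd (hl : Antitone l) (b : Fin m) :
    shuffle l hl (Fin.natAdd n b) = yPos l b := by
  simp [shuffle]

lemma sign_shuffle (hl : Antitone l) : sign (shuffle l hl) = (-1) ^ ∑ j, dualPart l j := by
  rw [sign_eq_neg_one_pow_of_strictMono_castAdd_natAdd]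
  · simp only [shuffle_castAdd, shuffle_natAdd, yPos_lt_xPos_iff hl, dualPart]
    exact congrArg _ (sum_congr rfl fun _ _ => Fin.card_filter_le_val)
  · simpa [Function.comp_def] using xPos_strictMono hl
  · simpa [Function.comp_def] using yPos_strictMono

variable (n m) in
def antitoneEquivOrderEmbedding :
    {l : Fin n → Fin (m + 1) // Antitone l} ≃ (Fin n ↪o Fin (n + m)) where
  toFun l := OrderEmbedding.ofStrictMono (xPos l.1) (xPos_strictMono l.2)
  invFun g := ⟨fun a => ⟨m + a - g a, by have := (g.strictMono.fin_val_bounds a).1; omega⟩,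
    fun a b hab => by
      have := g.strictMono.fin_val_sub_val_le a b
      have := g.strictMono.monotone hab
      simp only [Fin.le_def] at hab this ⊢
      omega⟩
  left_inv l := by
    ext a
    have := (l.1 a).isLt
    simp only [OrderEmbedding.coe_ofStrictMono, xPos]
    omega
  right_inv g := by
    ext a
    have := g.strictMono.fin_val_bounds a
    simp only [OrderEmbedding.coe_ofStrictMono, xPos]
    omega

variable (n m) in
lemma card_antitone : Nat.card {l : Fin n → Fin (m + 1) // Antitone l} = (n + m).choose n := by
  rw [Nat.card_congr ((antitoneEquivOrderEmbedding n m).trans Set.powersetCard.ofFinEmbEquiv),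
    Set.powersetCard.card, Nat.card_eq_fintype_card, Fintype.card_fin]

lemma bijective_shuffle_mul_permCongr_sumCongr :
    Function.Bijective
      fun p : {l : Fin n → Fin (m + 1) // Antitone l} × Perm (Fin n) × Perm (Fin m) =>
        shuffle p.1.1 p.1.2 * finSumFinEquiv.permCongr (p.2.1.sumCongr p.2.2) := by
  rw [Fintype.bijective_iff_injective_and_card]
  constructor
  · rintro ⟨⟨l, hl⟩, π, ρ⟩ ⟨⟨l', hl'⟩, π', ρ'⟩ h
    have hx : ∀ a, xPos l (π a) = xPos l' (π' a) := fun a => by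
      simpa using DFunLike.congr_fun h (Fin.castAdd m a)
    have hy : ∀ b, yPos l (ρ b) = yPos l' (ρ' b) := fun b => by
      simpa using DFunLike.congr_fun h (Fin.natAdd n b)
    have hxPos : xPos l = xPos l' := by
      rw [← (xPos_strictMono hl).range_inj (xPos_strictMono hl'), ← π.surjective.range_comp,
        ← π'.surjective.range_comp (xPos l')]
      exact congrArg Set.range (funext hx)
    obtain rfl : l = l' := funext fun a => by
      have h := congrArg Fin.val (congrFun hxPos a)
      have := (l a).isLt
      have := (l' a).isLt
      simp only [xPos] at h
      omega
    obtain rfl : π = π' := Equiv.ext fun a => (xPos_strictMono hl).injective (hx a)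
    obtain rfl : ρ = ρ' := Equiv.ext fun b => yPos_strictMono.injective (hy b)
    rfl
  · rw [Fintype.card_prod, Fintype.card_prod, Fintype.card_perm, Fintype.card_perm,
      Fintype.card_perm, ← Nat.card_eq_fintype_card, card_antitone]
    simp only [Fintype.card_fin, ← mul_assoc]
    rw [mul_right_comm, add_comm n m, Nat.add_choose_mul_factorial_mul_factorial]

variable {α β : Type*}

lemma submatrix_castAdd_shuffle (hl : Antitone l) (f : ℕ → α → β) (x : Fin n → α)
    (y : Fin m → α) :
    (Matrix.of fun i j : Fin (n + m) => f (n + m - 1 - j) (Fin.append x y i)).submatrix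
        (Fin.castAdd m) (shuffle l hl ∘ Fin.castAdd m) =
      Matrix.of fun i j : Fin n => f (l j + (n - 1 - j)) (x i) := by
  ext i j
  have := (l j).isLt
  simp only [submatrix_apply, of_apply, Function.comp_apply, shuffle_castAdd, Fin.append_left,
    xPos]
  congr 1
  omega

lemma submatrix_natAdd_shuffle (hl : Antitone l) (f : ℕ → α → β) (x : Fin n → α)
    (y : Fin m → α) :
    (Matrix.of fun i j : Fin (n + m) => f (n + m - 1 - j) (Fin.append x y i)).submatrix
        (Fin.natAdd n) (shuffle l hl ∘ Fin.natAdd n) =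
      Matrix.of fun i j : Fin m => f (dualPart l j + (m - 1 - j)) (y i) := by
  ext i j
  have := conjPart_le l (m - 1 - j + 1)
  simp only [submatrix_apply, of_apply, Function.comp_apply, shuffle_natAdd, Fin.append_right,
    yPos, dualPart]
  congr 1
  omega

theorem sum_neg_one_pow_mul_genSchur_mul_genSchur {K : Type*} [Field K] (F : ℕ → K[X])
    (hmonic : ∀ k, (F k).Monic) (hdeg : ∀ k, (F k).natDegree = k) (x : Fin n → K)
    (y : Fin m → K) (hVx : vandermondeProd x ≠ 0) (hVy : vandermondeProd y ≠ 0) :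
    ∑ l : {l : Fin n → Fin (m + 1) // Antitone l}, (-1 : K) ^ (∑ j, dualPart l.1 j) *
        genSchur F x (fun i => (l.1 i : ℕ)) * genSchur F y (dualPart l.1) =
      ∏ i, ∏ j, (x i - y j) := by
  let A := Matrix.of fun i j : Fin (n + m) => (F (n + m - 1 - j)).eval (Fin.append x y i)
  calc _ = ∑ l : {l : Fin n → Fin (m + 1) // Antitone l}, (sign (shuffle l.1 l.2) : K) *
        (A.submatrix (Fin.castAdd m) (shuffle l.1 l.2 ∘ Fin.castAdd m)).det *
        (A.submatrix (Fin.natAdd n) (shuffle l.1 l.2 ∘ Fin.natAdd n)).det /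
          (vandermondeProd x * vandermondeProd y) := by
        refine sum_congr rfl fun l _ => ?_
        simp only [A, sign_shuffle, submatrix_castAdd_shuffle l.2 fun k z => (F k).eval z,
          submatrix_natAdd_shuffle l.2 fun k z => (F k).eval z, genSchur]
        push_cast
        ring
    _ = A.det / (vandermondeProd x * vandermondeProd y) := by
        rw [← sum_div, det_eq_sum_sign_mul_det_submatrix_mul_det_submatrix A
          (fun l : {l : Fin n → Fin (m + 1) // Antitone l} => shuffle l.1 l.2)
          bijective_shuffle_mul_permCongr_sumCongr]
    _ = ∏ i, ∏ j, (x i - y j) := by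
        rw [det_eval_rev_eq_vandermondeProd F hmonic hdeg, vandermondeProd_append]
        field_simp

end DualCauchy

theorem ninth_variation_dual_cauchy_general {K : Type*} [Field K] {n m : ℕ}
    (F : ℕ → Polynomial K) (hmonic : ∀ k, (F k).Monic)
    (hdeg : ∀ k, (F k).natDegree = k)
    (x : Fin n → K) (y : Fin m → K)
    (hVx : vandermondeProd x ≠ 0) (hVy : vandermondeProd y ≠ 0) :
    ∑ l : {l : Fin n → Fin (m + 1) // ∀ i j : Fin n, i ≤ j → l j ≤ l i},
        ((-1 : K) ^
            (∑ j : Fin m, (n -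
              (Finset.univ.filter fun r : Fin n =>
                (m - 1 - (j : ℕ)) + 1 ≤ (l.1 r : ℕ)).card)) *
          genSchur F x (fun i => (l.1 i : ℕ)) *
          genSchur F y (fun j => n -
            (Finset.univ.filter fun r : Fin n =>
              (m - 1 - (j : ℕ)) + 1 ≤ (l.1 r : ℕ)).card)) =
      ∏ i : Fin n, ∏ j : Fin m, (x i - y j) := by
  rw [← DualCauchy.sum_neg_one_pow_mul_genSchur_mul_genSchur F hmonic hdeg x y hVx hVy]
  exact Fintype.sum_equiv (subtypeEquivRight fun l =>
    (⟨fun h _ _ => h _ _, fun h _ _ hab => h hab⟩ : (∀ i j, i ≤ j → l j ≤ l i) ↔ Antitone l))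
    _ _ fun _ => rfl

/-- Dual Cauchy identity, type A ninth variation: for an admissible sequence `F`,
`Σ_{λ ⊆ (mⁿ)} (−1)^{|λ̃|} s_λ^F(x₁,…,xₙ) s_{λ̃}^F(y₁,…,y_m) = ∏_{i,j} (xᵢ − yⱼ)`,
where `λ̃ = (n − λ'_m, …, n − λ'_1)` and `λ'` is the conjugate partition.
Partitions `λ` in the `n × m` rectangle are encoded as weakly decreasing functions
`Fin n → Fin (m+1)`; the conjugate is `λ'_i = #{r : λ_r ≥ i}`. -/
theorem ninth_variation_dual_cauchy {K : Type*} [Field K] {n m : ℕ}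
    (F : ℕ → Polynomial K) (hmonic : ∀ k, (F k).Monic)
    (hdeg : ∀ k, (F k).natDegree = k) (hF0 : F 0 = 1)
    (x : Fin n → K) (y : Fin m → K)
    (hVx : vandermondeProd x ≠ 0) (hVy : vandermondeProd y ≠ 0) :
    ∑ l : {l : Fin n → Fin (m + 1) // ∀ i j : Fin n, i ≤ j → l j ≤ l i},
        ((-1 : K) ^
            (∑ j : Fin m, (n -
              (Finset.univ.filter fun r : Fin n =>
                (m - 1 - (j : ℕ)) + 1 ≤ (l.1 r : ℕ)).card)) *
          genSchur F x (fun i => (l.1 i : ℕ)) *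
          genSchur F y (fun j => n -
            (Finset.univ.filter fun r : Fin n =>
              (m - 1 - (j : ℕ)) + 1 ≤ (l.1 r : ℕ)).card)) =
      ∏ i : Fin n, ∏ j : Fin m, (x i - y j) :=
  ninth_variation_dual_cauchy_general F hmonic hdeg x y hVx hVy
end

section
/- (Factorial complete homogeneous generating function) For the factorial Schur polynomials in n variables, with h_k(x|c) = s_{(k,0,…,0)}(x|c): Σ_{k=0}^∞ h_k(x|c) · t^k / ∏_{l=0}^{k+n−1} (1 − t c_l) = 1 / ∏_{i=1}^n (1 − x_i t), as formal power series in t. -/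
/-- The factorial power `(x|c)^k = (x − c₀)⋯(x − c_{k−1})`. -/
def factPow {K : Type*} [Field K] (x : K) (c : ℕ → K) (k : ℕ) : K :=
  ∏ i ∈ Finset.range k, (x - c i)

/-- The complete factorial symmetric polynomial
`h_k(x|c) = s_{(k,0,…,0)}(x|c) = det[(xᵢ|c)^{λⱼ+n−j}]/V(x)` for `λ = (k,0,…,0)`. -/
noncomputable def hFactorial {K : Type*} [Field K] {n : ℕ} (x : Fin n → K) (c : ℕ → K)
    (k : ℕ) : K :=
  (Matrix.of fun i j : Fin n =>
      factPow (x i) c ((if (j : ℕ) = 0 then k else 0) + (n - 1 - (j : ℕ)))).det /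
    vandermondeProd x

open Finset PowerSeries Filter Topology

/-!
Expanding the determinant defining `h_k(x|c)` along its first column gives
`V(x) h_k(x|c) = Σᵢ aᵢ (xᵢ|c)^{k+n-1}`, where the `aᵢ` are cofactors of `[(xᵢ|c)^{n-1-j}]`.
In one variable the series `Σₘ (y|c)^m t^m / ∏_{l ≤ m} (1 - t c_l)` telescopes to `1/(1 - y t)`,
since `(y|c)^{m+1} = (y|c)^m (y - c_m)`. So `V(x) t^{n-1}` times the left-hand side is
`Σᵢ aᵢ/(1 - xᵢ t)` minus finitely many terms carrying `Σᵢ aᵢ (xᵢ|c)^e` with `e < n - 1`, which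
vanish as determinants with two equal columns. Finally, multiplying row `i` of the determinant
`Σᵢ aᵢ/(1 - xᵢ t)` by `1 - xᵢ t` is a column operation on `[(xᵢ|c)^{n-1-j}]` of determinant
`t^{n-1}`, whence `Σᵢ aᵢ/(1 - xᵢ t) = V(x) t^{n-1} / ∏ᵢ (1 - xᵢ t)`.
-/

section Topology

variable {R : Type*}

-- `powerSeriesTopology R` is `PowerSeries.WithPiTopology` for the discrete topology on `R`.
instance powerSeriesTopology_isTopologicalRing [Ring R] : IsTopologicalRing (PowerSeries R) :=
  letI : TopologicalSpace R := ⊥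
  haveI : DiscreteTopology R := ⟨rfl⟩
  PowerSeries.WithPiTopology.instIsTopologicalRing R

instance powerSeriesTopology_t2Space : T2Space (PowerSeries R) :=
  letI : TopologicalSpace R := ⊥
  haveI : DiscreteTopology R := ⟨rfl⟩
  PowerSeries.WithPiTopology.instT2Space R

variable [Semiring R]

theorem tendsto_iff_coeff_eventually_eq {ι : Type*} {l : Filter ι} {f : ι → PowerSeries R}
    {g : PowerSeries R} :
    Tendsto f l (𝓝 g) ↔ ∀ d, ∀ᶠ i in l, coeff d (f i) = coeff d g := by
  let _ : TopologicalSpace R := ⊥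
  have _ : DiscreteTopology R := ⟨rfl⟩
  refine (PowerSeries.WithPiTopology.tendsto_iff_coeff_tendsto R f l g).trans ?_
  simp only [nhds_discrete, tendsto_pure]

theorem hasSum_of_X_pow_dvd {f : ℕ → PowerSeries R} (hf : ∀ k, X ^ k ∣ f k) :
    HasSum f (mk fun d => coeff d (∑ k ∈ range (d + 1), f k)) := by
  refine tendsto_iff_coeff_eventually_eq.mpr fun d => ?_
  filter_upwards [eventually_ge_atTop (range (d + 1))] with s hs
  rw [coeff_mk, map_sum, map_sum]
  refine (sum_subset hs fun k _ hk => ?_).symm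
  obtain ⟨q, hq⟩ := hf k
  rw [hq, coeff_X_pow_mul', if_neg (by simpa using hk)]

theorem hasSum_of_X_pow_dvd_of_coeff {f : ℕ → PowerSeries R} {g : PowerSeries R}
    (hf : ∀ k, X ^ k ∣ f k) (hg : ∀ d, coeff d (∑ k ∈ range (d + 1), f k) = coeff d g) :
    HasSum f g := by
  convert hasSum_of_X_pow_dvd hf
  ext d
  rw [coeff_mk, hg]

end Topology

section FactorialPowers

variable {K : Type*} [Field K]

theorem factPow_succ (y : K) (c : ℕ → K) (m : ℕ) :
    factPow y c (m + 1) = factPow y c m * (y - c m) :=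
  prod_range_succ _ _

theorem constantCoeff_prod_one_sub_C_mul_X {ι : Type*} (s : Finset ι) (a : ι → K) :
    constantCoeff (∏ l ∈ s, (1 - C (a l) * X)) = 1 := by
  simp [map_prod]

noncomputable def factTerm (y : K) (c : ℕ → K) (m : ℕ) : PowerSeries K :=
  C (factPow y c m) * X ^ m * (∏ l ∈ range (m + 1), (1 - C (c l) * X))⁻¹

theorem one_sub_C_mul_X_mul_sum_factTerm (y : K) (c : ℕ → K) (N : ℕ) :
    (1 - C y * X) * ∑ m ∈ range N, factTerm y c m =
      1 - C (factPow y c N) * X ^ N * (∏ l ∈ range N, (1 - C (c l) * X))⁻¹ := by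
  induction N with
  | zero => simp [factPow]
  | succ N ih =>
    set P := ∏ l ∈ range N, (1 - C (c l) * X)
    have hP : P⁻¹ = (1 - C (c N) * X) * (P * (1 - C (c N) * X))⁻¹ := by
      rw [PowerSeries.mul_inv_rev, ← mul_assoc, PowerSeries.mul_inv_cancel _ (by simp), one_mul]
    rw [sum_range_succ, mul_add, ih, hP, factTerm, prod_range_succ, factPow_succ]
    simp only [map_mul, map_sub, pow_succ]
    ring

theorem hasSum_factTerm (y : K) (c : ℕ → K) :
    HasSum (factTerm y c) (1 - C y * X)⁻¹ := by
  have hinv : (1 - C y * X)⁻¹ * (1 - C y * X) = 1 :=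
    PowerSeries.inv_mul_cancel _ (by simp)
  refine hasSum_of_X_pow_dvd_of_coeff (fun m => (dvd_mul_left _ _).mul_right _) fun d => ?_
  have hsum : ∑ m ∈ range (d + 1), factTerm y c m = (1 - C y * X)⁻¹ - X ^ (d + 1) *
      ((1 - C y * X)⁻¹ * C (factPow y c (d + 1)) *
        (∏ l ∈ range (d + 1), (1 - C (c l) * X))⁻¹) := by
    calc ∑ m ∈ range (d + 1), factTerm y c m
        = (1 - C y * X)⁻¹ * ((1 - C y * X) * ∑ m ∈ range (d + 1), factTerm y c m) := by
          rw [← mul_assoc, hinv, one_mul]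
      _ = _ := by rw [one_sub_C_mul_X_mul_sum_factTerm]; ring
  rw [hsum, map_sub, coeff_X_pow_mul', if_neg (by omega), sub_zero]

end FactorialPowers

section Determinants

variable {K : Type*} [Field K]

def factPowMatrix {n : ℕ} (x : Fin n → K) (c : ℕ → K) : Matrix (Fin n) (Fin n) K :=
  Matrix.of fun i j => factPow (x i) c (n - 1 - j)

theorem det_factPowMatrix {n : ℕ} (x : Fin n → K) (c : ℕ → K) :
    (factPowMatrix x c).det = vandermondeProd x := by
  let p : Fin n → Polynomial K := fun j => ∏ l ∈ range j, (Polynomial.X - Polynomial.C (c l))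
  have hp : ∀ j, (p j).Monic := fun j => Polynomial.monic_prod_of_monic _ _
    fun l _ => Polynomial.monic_X_sub_C _
  have hdeg : ∀ j, (p j).natDegree = j := fun j => by
    rw [Polynomial.natDegree_prod_of_monic _ _ fun l _ => Polynomial.monic_X_sub_C _]
    simp
  have hrev : factPowMatrix x c =
      (Matrix.of fun i j => (p j).eval ((x ∘ Fin.rev) i)).submatrix Fin.revPerm Fin.revPerm := by
    ext i j
    simp only [factPowMatrix, factPow, p, Matrix.submatrix_apply, Matrix.of_apply,
      Fin.revPerm_apply, Function.comp_apply, Fin.rev_rev, Polynomial.eval_prod,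
      Polynomial.eval_sub, Polynomial.eval_X, Polynomial.eval_C, Fin.val_rev]
    rw [Nat.sub_sub, add_comm]
  rw [hrev, Matrix.det_submatrix_equiv_self,
    ← Matrix.det_eval_matrixOfPolynomials_eq_det_vandermonde _ p hdeg hp,
    Matrix.det_vandermonde, vandermondeProd, prod_sigma', prod_sigma']
  refine prod_nbij' (fun p => ⟨p.2.rev, p.1.rev⟩) (fun p => ⟨p.2.rev, p.1.rev⟩) ?_ ?_ ?_ ?_ ?_
    <;> simp [Fin.rev_lt_rev]

variable {m : ℕ}

theorem vandermondeProd_mul_hFactorial (x : Fin (m + 1) → K) (c : ℕ → K)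
    (hV : vandermondeProd x ≠ 0) (k : ℕ) :
    vandermondeProd x * hFactorial x c k =
      ∑ i, (factPowMatrix x c).adjugate 0 i * factPow (x i) c (k + m) := by
  have hcol : (Matrix.of fun i j : Fin (m + 1) =>
      factPow (x i) c ((if (j : ℕ) = 0 then k else 0) + (m + 1 - 1 - j))) =
      (factPowMatrix x c).updateCol 0 fun i => factPow (x i) c (k + m) := by
    ext i j
    rcases eq_or_ne j 0 with rfl | hj
    · simp
    · simp [factPowMatrix, hj]
  rw [hFactorial, mul_div_cancel₀ _ hV, hcol, ← Matrix.cramer_apply,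
    Matrix.cramer_eq_adjugate_mulVec]
  rfl

theorem sum_adjugate_mul_factPow_of_lt (x : Fin (m + 1) → K) (c : ℕ → K) {e : ℕ} (he : e < m) :
    ∑ i, (factPowMatrix x c).adjugate 0 i * factPow (x i) c e = 0 := by
  have h := congrFun (congrFun (Matrix.adjugate_mul (factPowMatrix x c)) 0) ⟨m - e, by omega⟩
  rw [Matrix.mul_apply, Matrix.smul_apply, Matrix.one_apply_ne (by simp [Fin.ext_iff]; omega),
    smul_zero] at h
  rw [← h]
  refine sum_congr rfl fun i _ => ?_
  simp only [factPowMatrix, Matrix.of_apply]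
  congr 2
  omega

/-- Column `j + 1` records `(1 - y X)(y|c)^{m-1-j} = (1 - c_{m-1-j} X)(y|c)^{m-1-j} - X (y|c)^{m-j}`
and column `0` records `1 = (y|c)^0`, in the basis `(y|c)^{m-j}` of the columns of
`factPowMatrix`. -/
noncomputable def shiftMatrix (c : ℕ → K) (m : ℕ) :
    Matrix (Fin (m + 1)) (Fin (m + 1)) (PowerSeries K) :=
  Matrix.of fun i j => Fin.cases (if i = Fin.last m then 1 else 0)
    (fun j' => if i = j'.succ then 1 - C (c (m - 1 - j')) * X
      else if i = j'.castSucc then -X else 0) j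

theorem det_shiftMatrix (c : ℕ → K) (m : ℕ) : (shiftMatrix c m).det = X ^ m := by
  rw [Matrix.det_succ_column_zero, sum_eq_single (Fin.last m) (fun i _ hi => by
      simp [shiftMatrix, hi]) (by simp), Fin.succAbove_last,
    Matrix.det_of_isLowerTriangular _ fun p q hpq => ?_]
  · simp [shiftMatrix, Fin.ext_iff, ← mul_pow]
  · have hpq : p < q := hpq
    simp only [shiftMatrix, Matrix.submatrix_apply, Matrix.of_apply, Fin.cases_succ,
      Fin.ext_iff, Fin.val_castSucc, Fin.val_succ]
    rw [if_neg (by omega), if_neg (by omega)]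

theorem mapMatrix_mul_shiftMatrix (x : Fin (m + 1) → K) (c : ℕ → K)
    {w : Fin (m + 1) → PowerSeries K} (hw : ∀ i, (1 - C (x i) * X) * w i = 1) :
    C.mapMatrix (factPowMatrix x c) * shiftMatrix c m = Matrix.of fun i j =>
      (1 - C (x i) * X) * (C.mapMatrix (factPowMatrix x c)).updateCol 0 w i j := by
  refine Matrix.ext fun i j => ?_
  rw [Matrix.mul_apply, Matrix.of_apply]
  induction j using Fin.cases with
  | zero =>
    rw [sum_eq_single (Fin.last m) (fun k _ hk => by simp [shiftMatrix, hk]) (by simp)]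
    simp [shiftMatrix, factPowMatrix, factPow, hw]
  | succ j =>
    rw [Fintype.sum_eq_add j.succ j.castSucc (Fin.castSucc_lt_succ (i := j)).ne' fun k hk => by
      simp [shiftMatrix, hk.1, hk.2]]
    have hexp : m + 1 - 1 - (j.castSucc : ℕ) = m + 1 - 1 - (j.succ : ℕ) + 1 := by
      simp only [Fin.val_castSucc, Fin.val_succ]; omega
    have hc : m + 1 - 1 - (j.succ : ℕ) = m - 1 - j := by simp only [Fin.val_succ]; omega
    simp only [shiftMatrix, factPowMatrix, RingHom.mapMatrix_apply, Matrix.map_apply,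
      Matrix.of_apply, Matrix.updateCol_ne (Fin.succ_ne_zero j), Fin.cases_succ, ↓reduceIte,
      if_neg (Fin.castSucc_lt_succ (i := j)).ne, hexp, factPow_succ, hc]
    simp only [map_mul, map_sub]
    ring

theorem sum_C_adjugate_mul_inv (x : Fin (m + 1) → K) (c : ℕ → K) :
    ∑ i, C ((factPowMatrix x c).adjugate 0 i) * (1 - C (x i) * X)⁻¹ =
      C (vandermondeProd x) * X ^ m * (∏ i, (1 - C (x i) * X))⁻¹ := by
  set B := C.mapMatrix (factPowMatrix x c)
  set w : Fin (m + 1) → PowerSeries K := fun i => (1 - C (x i) * X)⁻¹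
  have hw : ∀ i, (1 - C (x i) * X) * w i = 1 := fun i => PowerSeries.mul_inv_cancel _ (by simp)
  have hdet :
      (∏ i, (1 - C (x i) * X)) * (B.updateCol 0 w).det = C (vandermondeProd x) * X ^ m := by
    rw [← Matrix.det_mul_column, ← mapMatrix_mul_shiftMatrix x c hw, Matrix.det_mul,
      det_shiftMatrix, ← RingHom.map_det, det_factPowMatrix]
  have hcramer : ∑ i, C ((factPowMatrix x c).adjugate 0 i) * w i = (B.updateCol 0 w).det := by
    rw [← Matrix.cramer_apply, Matrix.cramer_eq_adjugate_mulVec, ← RingHom.map_adjugate]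
    rfl
  rw [hcramer, ← hdet, mul_right_comm, PowerSeries.mul_inv_cancel _
    (by rw [constantCoeff_prod_one_sub_C_mul_X]; exact one_ne_zero), one_mul]

theorem sum_C_adjugate_mul_factTerm_of_lt (x : Fin (m + 1) → K) (c : ℕ → K) {e : ℕ}
    (he : e < m) : ∑ i, C ((factPowMatrix x c).adjugate 0 i) * factTerm (x i) c e = 0 := by
  simp only [factTerm, ← mul_assoc, ← map_mul, ← sum_mul, ← map_sum,
    sum_adjugate_mul_factPow_of_lt x c he, map_zero, zero_mul]

end Determinants

/-- Generating function for the complete factorial symmetric polynomials: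
`Σ_{k≥0} h_k(x|c) · t^k/∏_{l=0}^{k+n−1}(1 − t c_l) = 1/∏_{i=1}^n (1 − xᵢ t)`
as formal power series in `t`. -/
theorem hFactorial_generating_function {K : Type*} [Field K] {n : ℕ} (hn : 0 < n)
    (x : Fin n → K) (c : ℕ → K) (hV : vandermondeProd x ≠ 0) :
    ∑' k : ℕ,
        (PowerSeries.C (R := K) (hFactorial x c k) * (PowerSeries.X : PowerSeries K) ^ k *
          (∏ l ∈ Finset.range (k + n), (1 - PowerSeries.C (R := K) (c l) * PowerSeries.X))⁻¹) =
      (∏ i : Fin n, (1 - PowerSeries.C (R := K) (x i) * PowerSeries.X))⁻¹ := by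
  obtain ⟨m, rfl⟩ : ∃ m, n = m + 1 := ⟨n - 1, by omega⟩
  set a := (factPowMatrix x c).adjugate 0
  set F : ℕ → PowerSeries K := fun k =>
    C (hFactorial x c k) * X ^ k * (∏ l ∈ range (k + (m + 1)), (1 - C (c l) * X))⁻¹
  set D : PowerSeries K := C (vandermondeProd x) * X ^ m
  have hDF : ∀ k, D * F k = ∑ i, C (a i) * factTerm (x i) c (k + m) := fun k => by
    calc D * F k = C (vandermondeProd x * hFactorial x c k) * X ^ (k + m) *
          (∏ l ∈ range (k + (m + 1)), (1 - C (c l) * X))⁻¹ := by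
          simp only [D, F, map_mul, pow_add]; ring
      _ = _ := by
          rw [vandermondeProd_mul_hFactorial x c hV, map_sum, sum_mul, sum_mul]
          refine sum_congr rfl fun i _ => ?_
          rw [factTerm, map_mul, add_assoc]
          ring
  have hlim : ∑ i, C (a i) * ((1 - C (x i) * X)⁻¹ - ∑ e ∈ range m, factTerm (x i) c e) =
      D * (∏ i, (1 - C (x i) * X))⁻¹ := by
    simp only [mul_sub, sum_sub_distrib, mul_sum]
    rw [sum_comm, sum_eq_zero fun e he => sum_C_adjugate_mul_factTerm_of_lt x c (mem_range.mp he),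
      sub_zero, sum_C_adjugate_mul_inv]
  have hDsum : HasSum (fun k => D * F k) (D * (∏ i, (1 - C (x i) * X))⁻¹) := by
    simp_rw [hDF, ← hlim]
    exact hasSum_sum fun i _ =>
      ((hasSum_nat_add_iff' m).mpr (hasSum_factTerm (x i) c)).mul_left (C (a i))
  obtain ⟨s, hs⟩ : Summable F := ⟨_, hasSum_of_X_pow_dvd fun k => (dvd_mul_left _ _).mul_right _⟩
  have hD : D ≠ 0 := mul_ne_zero (by simpa using hV) (pow_ne_zero _ X_ne_zero)
  rw [hs.tsum_eq, mul_left_cancel₀ hD ((hs.mul_left D).unique hDsum)]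
end
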